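/- Let p be a prime. In the polynomial ring A = ℚ[x_1, x_2, x_3, …] (a polynomial variable x_n for each integer n ≥ 1), form the power series X(t) = 1 + Σ_{n≥1} x_n t^n ∈ A[[t]], let U and V be its p-singular and p-regular parts, and set Y(t) = V(t)·U(t)^{-1} = Σ_{n≥0} y_n t^n. Then the intersection (inside A) of the ℤ-subalgebra generated by {x_n : n ≥ 1} with the ℚ-subalgebra generated by {y_n : n ≥ 1, p ∤ n} equals the ℤ-subalgebra generated by {y_n : n ≥ 1, p ∤ n}. (This is the algebraic core of the theorem that the Grothendieck ring K_0^{𝔽_p}(S_∞) of projective modular representations of symmetric groups, identified via Brauer theory with the subring of ℤ[x_n] of virtual characters vanishing on p-singular elements, equals ℤ[y_n : p ∤ n].) -/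

import Mathlib

open PowerSeries

/-- The `p`-singular part of a power series `F = Σ fₙ tⁿ`, namely `Σ_{p ∣ n} fₙ tⁿ`. -/
noncomputable def pSingularPart {R : Type*} [CommRing R] (p : ℕ) (F : PowerSeries R) :
    PowerSeries R :=
  PowerSeries.mk fun n => if p ∣ n then PowerSeries.coeff n F else 0

/-- The `p`-regular part of a power series `F = Σ fₙ tⁿ`, namely `Σ_{p ∤ n} fₙ tⁿ`. -/
noncomputable def pRegularPart {R : Type*} [CommRing R] (p : ℕ) (F : PowerSeries R) :
    PowerSeries R :=
  PowerSeries.mk fun n => if p ∣ n then 0 else PowerSeries.coeff n F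

/-- `exp C = Σ_{k≥0} Cᵏ/k!` for a power series `C` with zero constant term over a
commutative `ℚ`-algebra.  (When the constant term of `C` is zero, `coeff n (C ^ k) = 0`
for `k > n`, so the truncated sum below computes the full exponential.) -/
noncomputable def psExp {R : Type*} [CommRing R] [Algebra ℚ R] (C : PowerSeries R) :
    PowerSeries R :=
  PowerSeries.mk fun n => ∑ k ∈ Finset.range (n + 1),
    ((k.factorial : ℚ)⁻¹) • PowerSeries.coeff n (C ^ k)

/-!
Since `U` has constant term `1` and integral coefficients, so does its inverse, hence
`Y = V·U⁻¹` is integral and `ℤ[y] ⊆ ℤ[x] ∩ ℚ[y]`. Conversely, let `π` kill the `p`-singular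
variables, `π : ℚ[xₙ] → ℚ[xₙ : p ∤ n]`. Then `π U = 1`, so `π Y = π V` and `π yₙ = xₙ` for
`p ∤ n`. Hence `xₙ ↦ yₙ` is a left inverse of `π` on `ℚ[y]`, and it maps `ℤ[xₙ : p ∤ n]` into
`ℤ[y]`; for `a ∈ ℤ[x] ∩ ℚ[y]` we have `π a ∈ ℤ[xₙ : p ∤ n]`, so `a ∈ ℤ[y]`.
-/

theorem PowerSeries.coeff_mem_of_mul_eq {R : Type*} [CommRing R] (S : Subring R)
    {U V Y : PowerSeries R} (hU : ∀ n, coeff n U ∈ S) (hV : ∀ n, coeff n V ∈ S)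
    (hU₀ : constantCoeff U = 1) (hY : Y * U = V) (n : ℕ) : coeff n Y ∈ S := by
  let U' : PowerSeries S := mk fun n => ⟨coeff n U, hU n⟩
  let V' : PowerSeries S := mk fun n => ⟨coeff n V, hV n⟩
  have hU' : map S.subtype U' = U := by ext n; simp [U']
  have hV' : map S.subtype V' = V := by ext n; simp [V']
  have hU'₀ : constantCoeff U' = 1 := Subtype.ext <| by
    simp [U', ← coeff_zero_eq_constantCoeff_apply, hU₀]
  obtain ⟨u, hu⟩ : IsUnit U' := isUnit_iff_constantCoeff.mpr (hU'₀ ▸ isUnit_one)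
  have hYmap : Y = map S.subtype (V' * ↑u⁻¹) := by
    rw [map_mul, hV', ← hY, ← hU', ← hu, mul_assoc, ← map_mul, u.mul_inv, map_one, mul_one]
  rw [hYmap, coeff_map]
  exact SetLike.coe_mem _

section PParts

variable {R : Type*} [CommRing R] (p : ℕ) (F : PowerSeries R)

@[simp]
theorem coeff_pSingularPart (n : ℕ) :
    coeff n (pSingularPart p F) = if p ∣ n then coeff n F else 0 :=
  coeff_mk _ _

@[simp]
theorem coeff_pRegularPart (n : ℕ) :
    coeff n (pRegularPart p F) = if p ∣ n then 0 else coeff n F :=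
  coeff_mk _ _

theorem coeff_pSingularPart_mem {σ : Type*} [SetLike σ R] [ZeroMemClass σ R] {S : σ}
    (hF : ∀ n, coeff n F ∈ S) (n : ℕ) : coeff n (pSingularPart p F) ∈ S := by
  rw [coeff_pSingularPart]
  split_ifs
  exacts [hF n, zero_mem S]

theorem coeff_pRegularPart_mem {σ : Type*} [SetLike σ R] [ZeroMemClass σ R] {S : σ}
    (hF : ∀ n, coeff n F ∈ S) (n : ℕ) : coeff n (pRegularPart p F) ∈ S := by
  rw [coeff_pRegularPart]
  split_ifs
  exacts [zero_mem S, hF n]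

theorem constantCoeff_pSingularPart : constantCoeff (pSingularPart p F) = constantCoeff F := by
  rw [← coeff_zero_eq_constantCoeff_apply, ← coeff_zero_eq_constantCoeff_apply,
    coeff_pSingularPart, if_pos (dvd_zero p)]

end PParts

open MvPolynomial

noncomputable def genericPowerSeries (R : Type*) [CommRing R] :
    PowerSeries (MvPolynomial ℕ+ R) :=
  PowerSeries.mk fun n => if h : 0 < n then X ⟨n, h⟩ else 1

section Generic

variable {R : Type*} [CommRing R]

@[simp]
theorem constantCoeff_genericPowerSeries : constantCoeff (genericPowerSeries R) = 1 := by
  simp [genericPowerSeries, ← coeff_zero_eq_constantCoeff_apply]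

@[simp]
theorem coeff_genericPowerSeries_pnat (n : ℕ+) : coeff n (genericPowerSeries R) = X n := by
  rw [genericPowerSeries, coeff_mk, dif_pos n.pos]
  rfl

theorem coeff_genericPowerSeries_mem_adjoin_range_X (n : ℕ) :
    coeff n (genericPowerSeries R) ∈
      Algebra.adjoin ℤ (Set.range (X : ℕ+ → MvPolynomial ℕ+ R)) := by
  rcases Nat.eq_zero_or_pos n with rfl | hn
  · simp [coeff_zero_eq_constantCoeff_apply]
  · lift n to ℕ+ using hn
    rw [coeff_genericPowerSeries_pnat]
    exact Algebra.subset_adjoin ⟨_, rfl⟩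

theorem coeff_mem_adjoin_range_X_of_mul_pSingularPart_eq {p : ℕ}
    {Y : PowerSeries (MvPolynomial ℕ+ R)}
    (hY : Y * pSingularPart p (genericPowerSeries R) = pRegularPart p (genericPowerSeries R))
    (n : ℕ) : coeff n Y ∈ Algebra.adjoin ℤ (Set.range (X : ℕ+ → MvPolynomial ℕ+ R)) := by
  refine PowerSeries.coeff_mem_of_mul_eq (Algebra.adjoin ℤ _).toSubring
    (coeff_pSingularPart_mem p _ coeff_genericPowerSeries_mem_adjoin_range_X)
    (coeff_pRegularPart_mem p _ coeff_genericPowerSeries_mem_adjoin_range_X)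
    (by rw [constantCoeff_pSingularPart, constantCoeff_genericPowerSeries]) hY n

end Generic

namespace MvPolynomial

variable {σ τ R : Type*} [CommRing R] {f : σ → τ} (hf : Function.Injective f)

@[simp]
theorem killCompl_X_apply (i : σ) : killCompl hf (X (f i) : MvPolynomial τ R) = X i := by
  simpa using killCompl_rename_app hf (X i : MvPolynomial σ R)

theorem killCompl_X_of_notMem_range {j : τ} (hj : j ∉ Set.range f) :
    killCompl hf (X j : MvPolynomial τ R) = 0 := by
  simp [killCompl, hj]

theorem killCompl_mem_adjoin_range_X {S : Type*} [CommRing S] [Algebra S R]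
    {a : MvPolynomial τ R} (ha : a ∈ Algebra.adjoin S (Set.range X)) :
    killCompl hf a ∈ Algebra.adjoin S (Set.range (X : σ → MvPolynomial σ R)) := by
  have h : killCompl hf a ∈ (Algebra.adjoin S (Set.range X)).map
      ((killCompl hf).restrictScalars S) := Subalgebra.mem_map.mpr ⟨a, ha, rfl⟩
  rw [AlgHom.map_adjoin] at h
  refine Algebra.adjoin_le ?_ h
  rintro _ ⟨_, ⟨j, rfl⟩, rfl⟩
  by_cases hj : j ∈ Set.range f
  · obtain ⟨i, rfl⟩ := hj
    rw [AlgHom.restrictScalars_apply, killCompl_X_apply]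
    exact Algebra.subset_adjoin ⟨i, rfl⟩
  · rw [AlgHom.restrictScalars_apply, killCompl_X_of_notMem_range hf hj]
    exact zero_mem _

end MvPolynomial

theorem Algebra.mem_adjoin_range_of_retraction {R K A ι : Type*} [CommRing R] [CommRing K]
    [CommRing A] [Algebra R K] [Algebra K A] [Algebra R A] [IsScalarTower R K A]
    (y : ι → A) (π : A →ₐ[K] MvPolynomial ι K) (hπ : ∀ i, π (y i) = X i) {a : A}
    (ha : a ∈ adjoin K (Set.range y)) (hπa : π a ∈ adjoin R (Set.range (X : ι → _))) :
    a ∈ adjoin R (Set.range y) := by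
  have hsection : Set.EqOn ((aeval y).comp π) (AlgHom.id K A) (adjoin K (Set.range y)) :=
    AlgHom.eqOn_adjoin_iff.mpr <| by
      rintro _ ⟨i, rfl⟩
      simp [hπ]
  have hmap : (adjoin R (Set.range (X : ι → MvPolynomial ι K))).map
      ((aeval y).restrictScalars R) = adjoin R (Set.range y) := by
    rw [AlgHom.map_adjoin, ← Set.range_comp]
    congr
    ext i
    simp
  have ha' : aeval y (π a) = a := hsection ha
  rw [← ha', ← hmap]
  exact Subalgebra.mem_map.mpr ⟨π a, hπa, rfl⟩

noncomputable def killPSingular (R : Type*) [CommRing R] (p : ℕ) :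
    MvPolynomial ℕ+ R →ₐ[R] MvPolynomial {n : ℕ+ // ¬ p ∣ (n : ℕ)} R :=
  killCompl Subtype.val_injective

section Killing

variable {R : Type*} [CommRing R] {p : ℕ}

theorem map_killPSingular_pSingularPart_genericPowerSeries :
    PowerSeries.map (killPSingular R p).toRingHom
      (pSingularPart p (genericPowerSeries R)) = 1 := by
  ext n : 1
  rw [PowerSeries.coeff_map, coeff_pSingularPart, PowerSeries.coeff_one]
  rcases Nat.eq_zero_or_pos n with rfl | hn
  · simp [coeff_zero_eq_constantCoeff_apply]
  · lift n to ℕ+ using hn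
    rw [if_neg n.ne_zero]
    split_ifs with hpn
    · rw [coeff_genericPowerSeries_pnat, AlgHom.toRingHom_eq_coe, RingHom.coe_coe]
      exact killCompl_X_of_notMem_range _ (by simpa using hpn)
    · exact map_zero _

theorem killPSingular_coeff_of_mul_pSingularPart_eq {Y : PowerSeries (MvPolynomial ℕ+ R)}
    (hY : Y * pSingularPart p (genericPowerSeries R) = pRegularPart p (genericPowerSeries R))
    (i : {n : ℕ+ // ¬ p ∣ (n : ℕ)}) :
    killPSingular R p (coeff (i : ℕ) Y) = X i := by
  have h := congrArg (coeff (i : ℕ)) <|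
    congrArg (PowerSeries.map (killPSingular R p).toRingHom) hY
  rwa [map_mul, map_killPSingular_pSingularPart_genericPowerSeries, mul_one,
    PowerSeries.coeff_map, PowerSeries.coeff_map, coeff_pRegularPart, if_neg i.2,
    coeff_genericPowerSeries_pnat, AlgHom.toRingHom_eq_coe, RingHom.coe_coe, killPSingular,
    killCompl_X_apply] at h

theorem killPSingular_mem_adjoin_range_X {a : MvPolynomial ℕ+ R}
    (ha : a ∈ Algebra.adjoin ℤ (Set.range (X : ℕ+ → MvPolynomial ℕ+ R))) :
    killPSingular R p a ∈ Algebra.adjoin ℤ (Set.range (X : {n : ℕ+ // ¬ p ∣ (n : ℕ)} → _)) :=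
  killCompl_mem_adjoin_range_X _ ha

end Killing

theorem setOf_coeff_not_dvd_eq_range {R : Type*} [Semiring R] (p : ℕ) (F : PowerSeries R) :
    {a : R | ∃ n : ℕ, 1 ≤ n ∧ ¬ p ∣ n ∧ a = coeff n F} =
      Set.range fun i : {n : ℕ+ // ¬ p ∣ (n : ℕ)} ↦ coeff (i : ℕ) F := by
  ext a
  constructor
  · rintro ⟨n, hn, hpn, rfl⟩
    exact ⟨⟨⟨n, hn⟩, hpn⟩, rfl⟩
  · rintro ⟨i, rfl⟩
    exact ⟨i, i.1.pos, i.2, rfl⟩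

theorem stmt6_general (p : ℕ)
    (X Y : PowerSeries (MvPolynomial ℕ+ ℚ))
    (hX : X = PowerSeries.mk fun n =>
      if h : 0 < n then MvPolynomial.X (⟨n, h⟩ : ℕ+) else 1)
    (hY : Y * pSingularPart p X = pRegularPart p X) :
    (Algebra.adjoin ℤ (Set.range (MvPolynomial.X : ℕ+ → MvPolynomial ℕ+ ℚ)) :
        Set (MvPolynomial ℕ+ ℚ)) ∩
      (Algebra.adjoin ℚ
        {a : MvPolynomial ℕ+ ℚ | ∃ n : ℕ, 1 ≤ n ∧ ¬ p ∣ n ∧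
          a = PowerSeries.coeff n Y} : Set (MvPolynomial ℕ+ ℚ)) =
    (Algebra.adjoin ℤ
        {a : MvPolynomial ℕ+ ℚ | ∃ n : ℕ, 1 ≤ n ∧ ¬ p ∣ n ∧
          a = PowerSeries.coeff n Y} : Set (MvPolynomial ℕ+ ℚ)) := by
  have hX' : X = genericPowerSeries ℚ := hX
  subst hX'
  rw [setOf_coeff_not_dvd_eq_range]
  set y := fun i : {n : ℕ+ // ¬ p ∣ (n : ℕ)} ↦ coeff (i : ℕ) Y
  ext a
  constructor
  · rintro ⟨haZ, haQ⟩
    exact Algebra.mem_adjoin_range_of_retraction _ (killPSingular ℚ p)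
      (killPSingular_coeff_of_mul_pSingularPart_eq hY) haQ (killPSingular_mem_adjoin_range_X haZ)
  · intro ha
    refine ⟨Algebra.adjoin_le ?_ ha, ?_⟩
    · rintro _ ⟨i, rfl⟩
      exact coeff_mem_adjoin_range_X_of_mul_pSingularPart_eq hY _
    · have hle : Algebra.adjoin ℤ (Set.range y) ≤
          (Algebra.adjoin ℚ (Set.range y)).restrictScalars ℤ :=
        Algebra.adjoin_le Algebra.subset_adjoin
      exact hle ha

/-- in `A = ℚ[x₁, x₂, …]` (variables indexed by `ℕ+`), let
`X(t) = 1 + Σ_{n≥1} xₙ tⁿ`, let `U`,`V` be its `p`-singular/`p`-regular parts and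
`Y = V·U⁻¹ = Σ yₙ tⁿ`.  Then `ℤ[xₙ : n ≥ 1] ∩ ℚ[yₙ : n ≥ 1, p ∤ n] = ℤ[yₙ : n ≥ 1, p ∤ n]`
as subsets of `A`. -/
theorem stmt6 (p : ℕ) (hp : p.Prime)
    (X Y : PowerSeries (MvPolynomial ℕ+ ℚ))
    (hX : X = PowerSeries.mk fun n =>
      if h : 0 < n then MvPolynomial.X (⟨n, h⟩ : ℕ+) else 1)
    (hY : Y * pSingularPart p X = pRegularPart p X) :
    (Algebra.adjoin ℤ (Set.range (MvPolynomial.X : ℕ+ → MvPolynomial ℕ+ ℚ)) :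
        Set (MvPolynomial ℕ+ ℚ)) ∩
      (Algebra.adjoin ℚ
        {a : MvPolynomial ℕ+ ℚ | ∃ n : ℕ, 1 ≤ n ∧ ¬ p ∣ n ∧
          a = PowerSeries.coeff n Y} : Set (MvPolynomial ℕ+ ℚ)) =
    (Algebra.adjoin ℤ
        {a : MvPolynomial ℕ+ ℚ | ∃ n : ℕ, 1 ≤ n ∧ ¬ p ∣ n ∧
          a = PowerSeries.coeff n Y} : Set (MvPolynomial ℕ+ ℚ)) :=
  stmt6_general p X Y hX hY
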